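/- Let X₀ be an ℝ^d-valued random variable with E[exp(‖X₀‖²/V²)] ≤ K, and let ε ∼ N(0, I_d) be independent of X₀. For t > 0 set μ_t = e^{-t}, σ_t = √(1 - e^{-2t}), and X_t = μ_t X₀ + σ_t ε. Then E[exp(‖X_t‖²/(2μ_t²V² + 8σ_t²))] ≤ 2^d · K, and consequently P(‖X_t‖ ≥ ξ) ≤ 2^d K exp(-ξ²/(2μ_t²V² + 8σ_t²)) for all ξ > 0. -/

import Mathlib

/-!
Since `(u + v)² ≤ 2u² + 2v²`, the exponent `‖a x + b y‖² / (2(a²p + b²q))` is at most the convex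
combination of `‖x‖²/p` and `‖y‖²/q` with weights proportional to `a²p` and `b²q`. Convexity of
`exp` then bounds `exp (‖X_t‖² / (2μ_t²V² + 8σ_t²))` pointwise by a convex combination of
`exp (‖X₀‖²/V²)` and `exp (‖ε‖²/4)`, whose expectations are at most `K` and exactly `2^(d/2)`;
both are at most `2^d K` since `K ≥ 1`. The tail bound is Markov's inequality for
`exp (‖X_t‖² / (2μ_t²V² + 8σ_t²))`.
-/

open MeasureTheory Real ProbabilityTheory Module

noncomputable def stdGaussianPDF {E : Type*} [Norm E] (n : ℕ) (x : E) : ℝ :=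
  (2 * π) ^ (-(n : ℝ) / 2) * rexp (-‖x‖ ^ 2 / 2)

lemma stdGaussianPDF_nonneg {E : Type*} [Norm E] (n : ℕ) (x : E) : 0 ≤ stdGaussianPDF n x := by
  unfold stdGaussianPDF; positivity

section WithDensity

variable {E : Type*} [SeminormedAddCommGroup E] [MeasurableSpace E] [OpensMeasurableSpace E]
  {μ : Measure E} (n : ℕ)

lemma measurable_stdGaussianPDF : Measurable (stdGaussianPDF (E := E) n) := by
  unfold stdGaussianPDF; fun_prop

lemma integrable_withDensity_stdGaussianPDF_iff {g : E → ℝ} :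
    Integrable g (μ.withDensity fun x => ENNReal.ofReal (stdGaussianPDF n x)) ↔
      Integrable (fun x => stdGaussianPDF n x * g x) μ := by
  rw [integrable_withDensity_iff_integrable_smul' (measurable_stdGaussianPDF n).ennreal_ofReal
    (by simp)]
  simp only [ENNReal.toReal_ofReal (stdGaussianPDF_nonneg n _), smul_eq_mul]

lemma integral_withDensity_stdGaussianPDF (g : E → ℝ) :
    ∫ x, g x ∂μ.withDensity (fun x => ENNReal.ofReal (stdGaussianPDF n x)) =
      ∫ x, stdGaussianPDF n x * g x ∂μ := by
  rw [integral_withDensity_eq_integral_toReal_smul (measurable_stdGaussianPDF n).ennreal_ofReal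
    (by simp)]
  simp only [ENNReal.toReal_ofReal (stdGaussianPDF_nonneg n _), smul_eq_mul]

end WithDensity

section Gaussian

variable {E : Type*} [NormedAddCommGroup E] [InnerProductSpace ℝ E] [FiniteDimensional ℝ E]
  [MeasurableSpace E] [BorelSpace E] {n : ℕ} {q : ℝ}

lemma integral_stdGaussianPDF_mul_exp_sq_norm_div (hn : finrank ℝ E = n) (hq : 2 < q) :
    ∫ x : E, stdGaussianPDF n x * rexp (‖x‖ ^ 2 / q) = (q / (q - 2)) ^ ((n : ℝ) / 2) := by
  have hb : 0 < (q - 2) / (2 * q) := by apply div_pos <;> linarith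
  have hpdf (x : E) : stdGaussianPDF n x * rexp (‖x‖ ^ 2 / q)
      = (2 * π) ^ (-(n : ℝ) / 2) * rexp (-((q - 2) / (2 * q)) * ‖x‖ ^ 2) := by
    rw [stdGaussianPDF, mul_assoc, ← exp_add]
    congr 2
    field_simp
    ring
  simp_rw [hpdf]
  rw [integral_const_mul, GaussianFourier.integral_rexp_neg_mul_sq_norm hb, hn,
    div_div_eq_mul_div, neg_div, rpow_neg (by positivity), ← inv_rpow (by positivity),
    ← mul_rpow (by positivity) (by positivity)]
  congr 1
  field_simp

variable {Ω : Type*} [MeasurableSpace Ω] {P : Measure Ω} {ε : Ω → E}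

lemma integrable_exp_sq_norm_div_of_map_eq_stdGaussian (hn : finrank ℝ E = n) (hq : 2 < q)
    (hε : AEMeasurable ε P)
    (hlaw : P.map ε = volume.withDensity fun x => ENNReal.ofReal (stdGaussianPDF n x)) :
    Integrable (fun ω => rexp (‖ε ω‖ ^ 2 / q)) P := by
  have hint : Integrable (fun x : E => rexp (‖x‖ ^ 2 / q)) (P.map ε) := by
    rw [hlaw, integrable_withDensity_stdGaussianPDF_iff]
    refine Integrable.of_integral_ne_zero ?_
    rw [integral_stdGaussianPDF_mul_exp_sq_norm_div hn hq]
    exact (rpow_pos_of_pos (div_pos (by linarith) (by linarith)) _).ne'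
  exact hint.comp_aemeasurable hε

lemma integral_exp_sq_norm_div_of_map_eq_stdGaussian (hn : finrank ℝ E = n) (hq : 2 < q)
    (hε : AEMeasurable ε P)
    (hlaw : P.map ε = volume.withDensity fun x => ENNReal.ofReal (stdGaussianPDF n x)) :
    ∫ ω, rexp (‖ε ω‖ ^ 2 / q) ∂P = (q / (q - 2)) ^ ((n : ℝ) / 2) := by
  rw [← integral_map (f := fun x : E => rexp (‖x‖ ^ 2 / q)) hε (by fun_prop), hlaw,
    integral_withDensity_stdGaussianPDF, integral_stdGaussianPDF_mul_exp_sq_norm_div hn hq]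

end Gaussian

lemma exp_sq_add_div_le {u v p q : ℝ} (hp : 0 < p) (hq : 0 < q) :
    rexp ((u + v) ^ 2 / (2 * (p + q)))
      ≤ p / (p + q) * rexp (u ^ 2 / p) + q / (p + q) * rexp (v ^ 2 / q) := by
  have hmean : (u + v) ^ 2 / (2 * (p + q))
      ≤ p / (p + q) * (u ^ 2 / p) + q / (p + q) * (v ^ 2 / q) := by
    rw [div_le_iff₀ (by positivity)]
    field_simp
    nlinarith [sq_nonneg (u - v)]
  refine (exp_le_exp.2 hmean).trans ?_
  simpa using convexOn_exp.2 (Set.mem_univ (u ^ 2 / p)) (Set.mem_univ (v ^ 2 / q))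
    (by positivity) (by positivity) (by field_simp)

lemma norm_smul_sq_div {E : Type*} [SeminormedAddCommGroup E] [NormedSpace ℝ E] {c : ℝ}
    (hc : c ≠ 0) (p : ℝ) (x : E) : ‖c • x‖ ^ 2 / (c ^ 2 * p) = ‖x‖ ^ 2 / p := by
  rw [norm_smul, mul_pow, norm_eq_abs, sq_abs, mul_div_mul_left _ _ (pow_ne_zero 2 hc)]

section SmulAdd

variable {E : Type*} [SeminormedAddCommGroup E] [NormedSpace ℝ E] {a b p q : ℝ}

lemma exp_sq_norm_smul_add_smul_le (ha : a ≠ 0) (hb : b ≠ 0) (hp : 0 < p) (hq : 0 < q)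
    (x y : E) :
    rexp (‖a • x + b • y‖ ^ 2 / (2 * (a ^ 2 * p + b ^ 2 * q)))
      ≤ a ^ 2 * p / (a ^ 2 * p + b ^ 2 * q) * rexp (‖x‖ ^ 2 / p)
        + b ^ 2 * q / (a ^ 2 * p + b ^ 2 * q) * rexp (‖y‖ ^ 2 / q) := by
  rw [← norm_smul_sq_div ha p x, ← norm_smul_sq_div hb q y]
  refine le_trans ?_ (exp_sq_add_div_le (by positivity) (by positivity))
  gcongr
  exact norm_add_le _ _

variable {Ω : Type*} [MeasurableSpace Ω] {μ : Measure Ω} {X Y : Ω → E} {M : ℝ}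

lemma integrable_exp_sq_norm_smul_add_smul (ha : a ≠ 0) (hb : b ≠ 0) (hp : 0 < p) (hq : 0 < q)
    (hX : AEStronglyMeasurable X μ) (hY : AEStronglyMeasurable Y μ)
    (hXi : Integrable (fun ω => rexp (‖X ω‖ ^ 2 / p)) μ)
    (hYi : Integrable (fun ω => rexp (‖Y ω‖ ^ 2 / q)) μ) :
    Integrable (fun ω => rexp (‖a • X ω + b • Y ω‖ ^ 2 / (2 * (a ^ 2 * p + b ^ 2 * q)))) μ := by
  set s := a ^ 2 * p + b ^ 2 * q
  refine ((hXi.const_mul (a ^ 2 * p / s)).add (hYi.const_mul (b ^ 2 * q / s))).mono'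
    (by fun_prop) (ae_of_all _ fun ω => ?_)
  rw [norm_of_nonneg (exp_nonneg _)]
  exact exp_sq_norm_smul_add_smul_le ha hb hp hq (X ω) (Y ω)

lemma integral_exp_sq_norm_smul_add_smul_le (ha : a ≠ 0) (hb : b ≠ 0) (hp : 0 < p) (hq : 0 < q)
    (hX : AEStronglyMeasurable X μ) (hY : AEStronglyMeasurable Y μ)
    (hXi : Integrable (fun ω => rexp (‖X ω‖ ^ 2 / p)) μ)
    (hYi : Integrable (fun ω => rexp (‖Y ω‖ ^ 2 / q)) μ)
    (hXM : ∫ ω, rexp (‖X ω‖ ^ 2 / p) ∂μ ≤ M) (hYM : ∫ ω, rexp (‖Y ω‖ ^ 2 / q) ∂μ ≤ M) :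
    ∫ ω, rexp (‖a • X ω + b • Y ω‖ ^ 2 / (2 * (a ^ 2 * p + b ^ 2 * q))) ∂μ ≤ M := by
  set s := a ^ 2 * p + b ^ 2 * q
  have hs : 0 < s := by positivity
  calc ∫ ω, rexp (‖a • X ω + b • Y ω‖ ^ 2 / (2 * s)) ∂μ
      ≤ ∫ ω, (a ^ 2 * p / s * rexp (‖X ω‖ ^ 2 / p) + b ^ 2 * q / s * rexp (‖Y ω‖ ^ 2 / q)) ∂μ :=
        integral_mono (integrable_exp_sq_norm_smul_add_smul ha hb hp hq hX hY hXi hYi)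
          ((hXi.const_mul _).add (hYi.const_mul _))
          fun ω => exp_sq_norm_smul_add_smul_le ha hb hp hq (X ω) (Y ω)
    _ = a ^ 2 * p / s * ∫ ω, rexp (‖X ω‖ ^ 2 / p) ∂μ
          + b ^ 2 * q / s * ∫ ω, rexp (‖Y ω‖ ^ 2 / q) ∂μ := by
        rw [integral_add (hXi.const_mul _) (hYi.const_mul _), integral_const_mul,
          integral_const_mul]
    _ ≤ a ^ 2 * p / s * M + b ^ 2 * q / s * M := by gcongr
    _ = M := by rw [← add_mul, ← add_div, div_self hs.ne', one_mul]

end SmulAdd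

lemma measureReal_le_norm_le_mul_exp {Ω E : Type*} [MeasurableSpace Ω] {μ : Measure Ω}
    [SeminormedAddCommGroup E] {Z : Ω → E} {D M ξ : ℝ} (hD : 0 < D) (hξ : 0 ≤ ξ)
    (hZi : Integrable (fun ω => rexp (‖Z ω‖ ^ 2 / D)) μ)
    (hZM : ∫ ω, rexp (‖Z ω‖ ^ 2 / D) ∂μ ≤ M) :
    μ.real {ω | ξ ≤ ‖Z ω‖} ≤ M * rexp (-ξ ^ 2 / D) := by
  have hset : {ω | ξ ≤ ‖Z ω‖} = {ω | rexp (ξ ^ 2 / D) ≤ rexp (‖Z ω‖ ^ 2 / D)} := by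
    ext ω
    simp only [Set.mem_ofPred_eq, exp_le_exp, div_le_div_iff_of_pos_right hD,
      pow_le_pow_iff_left₀ hξ (norm_nonneg _) two_ne_zero]
  have hmarkov := mul_meas_ge_le_integral_of_nonneg (ae_of_all _ fun ω => (exp_pos _).le) hZi
    (rexp (ξ ^ 2 / D))
  rw [hset, neg_div, exp_neg, ← div_eq_mul_inv, le_div_iff₀ (exp_pos _), mul_comm]
  exact hmarkov.trans hZM

theorem ou_subGaussian_general {Ω : Type*} [MeasurableSpace Ω]
    (P : Measure Ω) [IsProbabilityMeasure P]
    (d : ℕ) (X₀ ε : Ω → EuclideanSpace ℝ (Fin d))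
    (hX₀ : Measurable X₀) (hε : Measurable ε)
    (V K : ℝ) (hV : 0 < V)
    (hSG : ∫ ω, Real.exp (‖X₀ ω‖ ^ 2 / V ^ 2) ∂P ≤ K)
    (hSGint : Integrable (fun ω => Real.exp (‖X₀ ω‖ ^ 2 / V ^ 2)) P)
    (hlaw : Measure.map ε P =
      MeasureTheory.volume.withDensity (fun x =>
        ENNReal.ofReal ((2 * Real.pi) ^ (-(d : ℝ) / 2) * Real.exp (-‖x‖ ^ 2 / 2))))
    (t : ℝ) (ht : 0 < t) :
    (∫ ω, Real.exp
        (‖Real.exp (-t) • X₀ ω + Real.sqrt (1 - Real.exp (-2 * t)) • ε ω‖ ^ 2 /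
          (2 * Real.exp (-t) ^ 2 * V ^ 2 + 8 * (1 - Real.exp (-2 * t)))) ∂P
      ≤ 2 ^ d * K) ∧
    ∀ ξ > (0 : ℝ),
      (P {ω | ξ ≤ ‖Real.exp (-t) • X₀ ω + Real.sqrt (1 - Real.exp (-2 * t)) • ε ω‖}).toReal
        ≤ 2 ^ d * K *
          Real.exp (-ξ ^ 2 / (2 * Real.exp (-t) ^ 2 * V ^ 2 + 8 * (1 - Real.exp (-2 * t)))) := by
  set μt := rexp (-t)
  set σt := √(1 - rexp (-2 * t))
  have hvar : 0 < 1 - rexp (-2 * t) := sub_pos.2 (exp_lt_one_iff.2 (by linarith))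
  have hD : 2 * μt ^ 2 * V ^ 2 + 8 * (1 - rexp (-2 * t)) = 2 * (μt ^ 2 * V ^ 2 + σt ^ 2 * 4) := by
    rw [sq_sqrt hvar.le]; ring
  have hK : 1 ≤ K := hSG.trans' <| by
    simpa using integral_mono (integrable_const (1 : ℝ)) hSGint fun ω => one_le_exp (by positivity)
  have h2d : (1 : ℝ) ≤ 2 ^ d := one_le_pow₀ one_le_two
  have hεi := integrable_exp_sq_norm_div_of_map_eq_stdGaussian finrank_euclideanSpace_fin
    (by norm_num : (2 : ℝ) < 4) hε.aemeasurable hlaw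
  have hε2d : ∫ ω, rexp (‖ε ω‖ ^ 2 / 4) ∂P ≤ 2 ^ d := by
    rw [integral_exp_sq_norm_div_of_map_eq_stdGaussian finrank_euclideanSpace_fin
      (by norm_num : (2 : ℝ) < 4) hε.aemeasurable hlaw, show (4 : ℝ) / (4 - 2) = 2 by norm_num]
    exact (rpow_le_rpow_of_exponent_le one_le_two (half_le_self d.cast_nonneg)).trans_eq
      (rpow_natCast 2 d)
  have hμt : μt ≠ 0 := (exp_pos _).ne'
  have hσt : σt ≠ 0 := sqrt_ne_zero'.2 hvar
  have hint := integrable_exp_sq_norm_smul_add_smul hμt hσt (by positivity) four_pos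
    hX₀.aestronglyMeasurable hε.aestronglyMeasurable hSGint hεi
  have hbound := integral_exp_sq_norm_smul_add_smul_le hμt hσt (by positivity) four_pos
    hX₀.aestronglyMeasurable hε.aestronglyMeasurable hSGint hεi
    (hSG.trans (le_mul_of_one_le_left (by linarith) h2d))
    (hε2d.trans (le_mul_of_one_le_right (by positivity) hK))
  rw [hD]
  exact ⟨hbound, fun ξ hξ => measureReal_le_norm_le_mul_exp (by positivity) hξ.le hint hbound⟩

/-- Sub-Gaussianity of the Ornstein–Uhlenbeck forward process: if `X₀` has
`E[exp(‖X₀‖²/V²)] ≤ K` and `ε ∼ N(0, I_d)` is independent of `X₀`, then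
`X_t = μ_t X₀ + σ_t ε` (with `μ_t = e^{-t}`, `σ_t = √(1 - e^{-2t})`) satisfies
`E[exp(‖X_t‖²/(2μ_t²V² + 8σ_t²))] ≤ 2^d K` and consequently
`P(‖X_t‖ ≥ ξ) ≤ 2^d K exp(-ξ²/(2μ_t²V² + 8σ_t²))` for all `ξ > 0`. -/
theorem ou_subGaussian {Ω : Type*} [MeasurableSpace Ω]
    (P : Measure Ω) [IsProbabilityMeasure P]
    (d : ℕ) (X₀ ε : Ω → EuclideanSpace ℝ (Fin d))
    (hX₀ : Measurable X₀) (hε : Measurable ε)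
    (V K : ℝ) (hV : 0 < V) (hK : 0 < K)
    (hSG : ∫ ω, Real.exp (‖X₀ ω‖ ^ 2 / V ^ 2) ∂P ≤ K)
    (hSGint : Integrable (fun ω => Real.exp (‖X₀ ω‖ ^ 2 / V ^ 2)) P)
    (hlaw : Measure.map ε P =
      MeasureTheory.volume.withDensity (fun x =>
        ENNReal.ofReal ((2 * Real.pi) ^ (-(d : ℝ) / 2) * Real.exp (-‖x‖ ^ 2 / 2))))
    (hindep : IndepFun X₀ ε P)
    (t : ℝ) (ht : 0 < t) :
    (∫ ω, Real.exp
        (‖Real.exp (-t) • X₀ ω + Real.sqrt (1 - Real.exp (-2 * t)) • ε ω‖ ^ 2 /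
          (2 * Real.exp (-t) ^ 2 * V ^ 2 + 8 * (1 - Real.exp (-2 * t)))) ∂P
      ≤ 2 ^ d * K) ∧
    ∀ ξ > (0 : ℝ),
      (P {ω | ξ ≤ ‖Real.exp (-t) • X₀ ω + Real.sqrt (1 - Real.exp (-2 * t)) • ε ω‖}).toReal
        ≤ 2 ^ d * K *
          Real.exp (-ξ ^ 2 / (2 * Real.exp (-t) ^ 2 * V ^ 2 + 8 * (1 - Real.exp (-2 * t)))) :=
  ou_subGaussian_general P d X₀ ε hX₀ hε V K hV hSG hSGint hlaw t ht
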